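/- arXiv:2604.18659 — 5 statements merged into one kernel-verified Lean document; each statement's English description precedes it below -/
import Mathlib

section
/- For ρ ∈ ℂ with Re(ρ) > -1 and any m ∈ ℤ≥0, the function x ↦ x^ρ (ln x)^m satisfies (P - 1/(ρ+1))^{m+1}[x^ρ (ln x)^m] = 0, i.e., it is a generalized eigenfunction of the Cesàro operator P with eigenvalue 1/(ρ+1). -/
open Filter intervalIntegral

/-- The continuous Cesàro operator. -/
noncomputable def cesaroP (f : ℝ → ℂ) : ℝ → ℂ :=
  fun x => (1 / (x : ℂ)) * ∫ t in (0 : ℝ)..x, f t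

/-- The operator `P - λ·Id` acting on functions. -/
noncomputable def cesaroPSub (lam : ℂ) (f : ℝ → ℂ) : ℝ → ℂ :=
  fun x => cesaroP f x - lam * f x

/-!
Write `g k x = x ^ ρ * (log x) ^ k`. Differentiating `x ^ (ρ + 1) * (log x) ^ k` and integrating
from `0` (the boundary term vanishes because `Re ρ > -1`) gives
`(ρ + 1) P (g k) + k P (g (k - 1)) = g k`, that is
`(P - 1/(ρ+1)) (g k) = -(k/(ρ+1)) P (g (k - 1))`. Since, inductively, `P (g (k - 1))` is a
combination of `g 0, …, g (k - 1)` on `(0, ∞)`, the operator `P - 1/(ρ+1)` lowers the top power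
of `log x` in such a combination by one, and `m + 1` applications annihilate `g m`.
-/

open MeasureTheory Set Topology Asymptotics

section Cesaro

variable {f g : ℝ → ℂ} {x : ℝ}

theorem cesaroP_congr (h : EqOn f g (Ioc 0 x)) (hx : 0 < x) : cesaroP f x = cesaroP g x := by
  unfold cesaroP
  congr 1
  refine integral_congr_ae (ae_of_all _ fun t ht => h ?_)
  rwa [uIoc_of_le hx.le] at ht

theorem cesaroPSub_eqOn_of_eqOn (lam : ℂ) (h : EqOn f g (Ioi 0)) :
    EqOn (cesaroPSub lam f) (cesaroPSub lam g) (Ioi 0) := fun x hx => by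
  simp only [cesaroPSub, cesaroP_congr (h.mono Ioc_subset_Ioi_self) hx, h hx]

theorem cesaroPSub_sum_smul {ι : Type*} (lam : ℂ) (s : Finset ι) (c : ι → ℂ) {f : ι → ℝ → ℂ}
    (hf : ∀ i ∈ s, IntervalIntegrable (f i) volume 0 x) :
    cesaroPSub lam (∑ i ∈ s, c i • f i) x = ∑ i ∈ s, c i * cesaroPSub lam (f i) x := by
  simp only [cesaroPSub, cesaroP, Finset.sum_apply, Pi.smul_apply, smul_eq_mul,
    integral_finsetSum fun i hi => (hf i hi).const_mul (c i),
    intervalIntegral.integral_const_mul,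
    Finset.mul_sum, ← Finset.sum_sub_distrib]
  exact Finset.sum_congr rfl fun i _ => by ring

end Cesaro

theorem intervalIntegrable_of_integrableAtFilter_nhdsGT {E : Type*} [NormedAddCommGroup E]
    {f : ℝ → E} {a b : ℝ} (hab : a < b) (hf : IntegrableAtFilter f (𝓝[>] a))
    (hcont : ContinuousOn f (Ioc a b)) : IntervalIntegrable f volume a b := by
  obtain ⟨s, hs, hfs⟩ := hf
  obtain ⟨u, hau, hus⟩ := mem_nhdsGT_iff_exists_Ioo_subset.mp hs
  have hcover : Ioc a b ⊆ Ioo a u ∪ Icc (min u b) b := fun t ⟨hat, htb⟩ => by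
    by_cases htu : t < u
    · exact Or.inl ⟨hat, htu⟩
    · exact Or.inr ⟨min_le_of_left_le (not_lt.mp htu), htb⟩
  have hIcc : Icc (min u b) b ⊆ Ioc a b := Icc_subset_Ioc (lt_min hau hab) le_rfl
  rw [intervalIntegrable_iff_integrableOn_Ioc_of_le hab.le]
  exact (integrableOn_union.mpr ⟨hfs.mono_set hus, (hcont.mono hIcc).integrableOn_Icc⟩).mono_set
    hcover

theorem integrableAtFilter_rpow_nhdsGT_zero {s : ℝ} (hs : -1 < s) :
    IntegrableAtFilter (fun t : ℝ => t ^ s) (𝓝[>] 0) :=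
  ⟨Ioc 0 1, Ioc_mem_nhdsGT zero_lt_one,
    (intervalIntegrable_rpow' hs (a := 0) (b := 1)).1⟩

theorem tendsto_rpow_nhdsGT_zero {s : ℝ} (hs : 0 < s) :
    Tendsto (fun t : ℝ => t ^ s) (𝓝[>] 0) (𝓝 0) := by
  simpa [Real.zero_rpow hs.ne'] using
    ((Real.continuousAt_rpow_const 0 s (Or.inr hs.le)).tendsto.mono_left nhdsWithin_le_nhds)

noncomputable def cpowLogPow (ρ : ℂ) (k : ℕ) (t : ℝ) : ℂ := (t : ℂ) ^ ρ * (Real.log t : ℂ) ^ k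

section CpowLogPow

variable {ρ : ℂ} {t x : ℝ}

theorem continuousAt_cpowLogPow (ρ : ℂ) (k : ℕ) (ht : 0 < t) : ContinuousAt (cpowLogPow ρ k) t :=
  (Complex.continuousAt_ofReal_cpow_const t ρ (Or.inr ht.ne')).mul
    ((Complex.continuous_ofReal.continuousAt.comp (Real.continuousAt_log ht.ne')).pow k)

theorem continuousOn_cpowLogPow (ρ : ℂ) (k : ℕ) : ContinuousOn (cpowLogPow ρ k) (Ioi 0) :=
  fun _ ht => (continuousAt_cpowLogPow ρ k ht).continuousWithinAt

theorem cpowLogPow_isBigO_rpow (k : ℕ) {s : ℝ} (hs : s < ρ.re) :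
    cpowLogPow ρ k =O[𝓝[>] 0] fun t => t ^ s := by
  have hlog : (fun t => |Real.log t| ^ k) =O[𝓝[>] 0] fun t => t ^ (s - ρ.re) := by
    simpa [Real.rpow_natCast] using
      (isLittleO_abs_log_rpow_rpow_nhdsGT_zero (k : ℝ) (sub_neg.mpr hs)).isBigO
  refine isBigO_norm_left.mp (((isBigO_refl (fun t : ℝ => t ^ ρ.re) _).mul hlog).congr' ?_ ?_)
  · filter_upwards [self_mem_nhdsWithin] with t ht
    simp [cpowLogPow, Complex.norm_cpow_eq_rpow_re_of_pos ht]
  · filter_upwards [self_mem_nhdsWithin] with t ht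
    rw [← Real.rpow_add ht, add_sub_cancel]

theorem intervalIntegrable_cpowLogPow (hρ : -1 < ρ.re) (k : ℕ) (hx : 0 < x) :
    IntervalIntegrable (cpowLogPow ρ k) volume 0 x := by
  have hs : (ρ.re - 1) / 2 < ρ.re := by linarith
  have hs' : -1 < (ρ.re - 1) / 2 := by linarith
  refine intervalIntegrable_of_integrableAtFilter_nhdsGT hx ?_
    ((continuousOn_cpowLogPow ρ k).mono Ioc_subset_Ioi_self)
  exact (cpowLogPow_isBigO_rpow k hs).integrableAtFilter
    ((continuousOn_cpowLogPow ρ k).stronglyMeasurableAtFilter_nhdsWithin measurableSet_Ioi 0)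
    (integrableAtFilter_rpow_nhdsGT_zero hs')

theorem tendsto_cpowLogPow_nhdsGT_zero (hρ : 0 < ρ.re) (k : ℕ) :
    Tendsto (cpowLogPow ρ k) (𝓝[>] 0) (𝓝 0) :=
  (cpowLogPow_isBigO_rpow k (half_lt_self hρ)).trans_tendsto
    (tendsto_rpow_nhdsGT_zero (half_pos hρ))

theorem cpowLogPow_add_one (ρ : ℂ) (k : ℕ) (ht : 0 < t) :
    cpowLogPow (ρ + 1) k t = t * cpowLogPow ρ k t := by
  rw [cpowLogPow, cpowLogPow, Complex.cpow_add _ _ (by exact_mod_cast ht.ne'), Complex.cpow_one]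
  ring

theorem hasDerivAt_cpowLogPow_add_one (ρ : ℂ) (k : ℕ) (ht : 0 < t) :
    HasDerivAt (cpowLogPow (ρ + 1) k)
      ((ρ + 1) * cpowLogPow ρ k t + k * cpowLogPow ρ (k - 1) t) t := by
  have hcpow := (Complex.hasStrictDerivAt_cpow_const (c := ρ + 1)
    (Complex.ofReal_mem_slitPlane.mpr ht)).hasDerivAt.comp_ofReal
  have hlog := ((Real.hasDerivAt_log ht.ne').ofReal_comp).pow k
  have ht' : (t : ℂ) ≠ 0 := by exact_mod_cast ht.ne'
  refine (hcpow.mul hlog).congr_deriv ?_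
  rw [Pi.pow_apply, add_sub_cancel_right, cpowLogPow, cpowLogPow, Complex.cpow_add _ _ ht',
    Complex.cpow_one]
  push_cast
  field_simp

/-- For `k = 0` the truncated `k - 1` is harmless: its coefficient is `0`. -/
theorem integral_cpowLogPow (hρ : -1 < ρ.re) (k : ℕ) (hx : 0 < x) :
    ∫ t in (0 : ℝ)..x, ((ρ + 1) * cpowLogPow ρ k t + k * cpowLogPow ρ (k - 1) t) =
      x * cpowLogPow ρ k x := by
  rw [← cpowLogPow_add_one ρ k hx, integral_eq_sub_of_hasDerivAt_of_tendsto hx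
    (fun t ht => hasDerivAt_cpowLogPow_add_one ρ k ht.1)
    (((intervalIntegrable_cpowLogPow hρ k hx).const_mul _).add
      ((intervalIntegrable_cpowLogPow hρ (k - 1) hx).const_mul _))
    (tendsto_cpowLogPow_nhdsGT_zero (by simp; linarith) k)
    (continuousAt_cpowLogPow _ k hx).continuousWithinAt, sub_zero]

theorem cesaroPSub_cpowLogPow (hρ : -1 < ρ.re) (k : ℕ) (hx : 0 < x) :
    cesaroPSub (1 / (ρ + 1)) (cpowLogPow ρ k) x =
      -(k / (ρ + 1)) * cesaroP (cpowLogPow ρ (k - 1)) x := by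
  have hρ1 : ρ + 1 ≠ 0 := fun h => by simp [Complex.ext_iff] at h; linarith
  have hint := integral_cpowLogPow hρ k hx
  rw [integral_add ((intervalIntegrable_cpowLogPow hρ k hx).const_mul _)
    ((intervalIntegrable_cpowLogPow hρ (k - 1) hx).const_mul _),
    intervalIntegral.integral_const_mul, intervalIntegral.integral_const_mul] at hint
  have hx' : (x : ℂ) ≠ 0 := by exact_mod_cast hx.ne'
  simp only [cesaroPSub, cesaroP]
  field_simp
  linear_combination hint

end CpowLogPow

def vanishingOnIoi : Submodule ℂ (ℝ → ℂ) where
  carrier := {f | EqOn f 0 (Ioi 0)}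
  add_mem' hf hg x hx := by simp [hf hx, hg hx]
  zero_mem' := eqOn_refl _ _
  smul_mem' c f hf x hx := by simp [hf hx]

/-- Combinations of `cpowLogPow ρ j`, `j < n`, up to functions vanishing on `(0, ∞)`, the only
values `cesaroPSub` reads at positive points. -/
noncomputable def cpowLogSpan (ρ : ℂ) (n : ℕ) : Submodule ℂ (ℝ → ℂ) :=
  Submodule.span ℂ (cpowLogPow ρ '' ↑(Finset.range n)) ⊔ vanishingOnIoi

section CpowLogSpan

variable {ρ : ℂ} {f g : ℝ → ℂ} {n : ℕ}

theorem cpowLogSpan_mono (ρ : ℂ) : Monotone (cpowLogSpan ρ) := fun _ _ h =>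
  sup_le_sup_right (Submodule.span_mono (image_mono (by simpa using h))) _

theorem cpowLogPow_mem_cpowLogSpan {k : ℕ} (h : k < n) : cpowLogPow ρ k ∈ cpowLogSpan ρ n :=
  Submodule.mem_sup_left (Submodule.subset_span ⟨k, by simpa using h, rfl⟩)

theorem mem_cpowLogSpan_of_eqOn (hf : f ∈ cpowLogSpan ρ n) (h : EqOn f g (Ioi 0)) :
    g ∈ cpowLogSpan ρ n := by
  have hgf : g - f ∈ cpowLogSpan ρ n :=
    Submodule.mem_sup_right fun x hx => by simp [h hx]
  simpa using add_mem hf hgf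

theorem eqOn_zero_of_mem_cpowLogSpan_zero (hf : f ∈ cpowLogSpan ρ 0) : EqOn f 0 (Ioi 0) := by
  have hf : f ∈ vanishingOnIoi := by simpa [cpowLogSpan] using hf
  exact hf

theorem cesaroPSub_cpowLogPow_mem (hρ : -1 < ρ.re) (k : ℕ) :
    cesaroPSub (1 / (ρ + 1)) (cpowLogPow ρ k) ∈ cpowLogSpan ρ k := by
  induction k with
  | zero =>
    refine mem_cpowLogSpan_of_eqOn (zero_mem _) fun x hx => ?_
    rw [Pi.zero_apply, cesaroPSub_cpowLogPow hρ 0 hx]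
    simp
  | succ k ih =>
    have hP : cesaroPSub (1 / (ρ + 1)) (cpowLogPow ρ k) + (1 / (ρ + 1)) • cpowLogPow ρ k ∈
        cpowLogSpan ρ (k + 1) :=
      add_mem (cpowLogSpan_mono ρ k.le_succ ih)
        (Submodule.smul_mem _ _ (cpowLogPow_mem_cpowLogSpan k.lt_succ_self))
    refine mem_cpowLogSpan_of_eqOn (Submodule.smul_mem _ (-((k + 1 : ℕ) / (ρ + 1))) hP)
      fun x hx => ?_
    rw [cesaroPSub_cpowLogPow hρ (k + 1) hx]
    simp [cesaroPSub]

theorem cesaroPSub_mem_cpowLogSpan (hρ : -1 < ρ.re) (hf : f ∈ cpowLogSpan ρ (n + 1)) :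
    cesaroPSub (1 / (ρ + 1)) f ∈ cpowLogSpan ρ n := by
  obtain ⟨p, hp, z, hz, rfl⟩ := Submodule.mem_sup.mp hf
  obtain ⟨c, rfl⟩ := (Submodule.mem_span_image_finset_iff_exists_fun' ℂ).mp hp
  have hsum : ∑ i ∈ Finset.range (n + 1), c i • cesaroPSub (1 / (ρ + 1)) (cpowLogPow ρ i) ∈
      cpowLogSpan ρ n := Submodule.sum_mem _ fun i hi => Submodule.smul_mem _ _
    (cpowLogSpan_mono ρ (Nat.lt_succ_iff.mp (Finset.mem_range.mp hi))
      (cesaroPSub_cpowLogPow_mem hρ i))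
  have hpz : EqOn (∑ i ∈ Finset.range (n + 1), c i • cpowLogPow ρ i + z)
      (∑ i ∈ Finset.range (n + 1), c i • cpowLogPow ρ i) (Ioi 0) := fun t ht => by
    simp [hz ht]
  refine mem_cpowLogSpan_of_eqOn hsum fun x hx => ?_
  rw [cesaroPSub_eqOn_of_eqOn _ hpz hx,
    cesaroPSub_sum_smul _ _ _ fun i _ => intervalIntegrable_cpowLogPow hρ i hx]
  simp

theorem iterate_cesaroPSub_mem_cpowLogSpan (hρ : -1 < ρ.re) (i : ℕ)
    (hf : f ∈ cpowLogSpan ρ (n + i)) : (cesaroPSub (1 / (ρ + 1)))^[i] f ∈ cpowLogSpan ρ n := by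
  induction i generalizing f with
  | zero => exact hf
  | succ i ih => exact ih (cesaroPSub_mem_cpowLogSpan hρ hf)

end CpowLogSpan

/-- For `Re ρ > -1` and `m ∈ ℤ≥0`, the function `x ^ ρ (ln x)^m` is a generalized
eigenfunction of the Cesàro operator with eigenvalue `1/(ρ+1)`:
`(P - 1/(ρ+1))^(m+1)` annihilates it (on `(0,∞)`). -/
theorem cesaro_generalized_eigenfunction (ρ : ℂ) (hρ : -1 < ρ.re) (m : ℕ) :
    ∀ x : ℝ, 0 < x →
      ((cesaroPSub (1 / (ρ + 1)))^[m + 1]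
        (fun y : ℝ => (y : ℂ) ^ ρ * (Real.log y : ℂ) ^ m)) x = 0 :=
  eqOn_zero_of_mem_cpowLogSpan_zero <| iterate_cesaroPSub_mem_cpowLogSpan hρ (m + 1)
    (cpowLogPow_mem_cpowLogSpan (by omega))
end

section
/- Let s : [0,∞) → ℝ be the step function with s(x) = ⌊x⌋ (the partial-sum function of 1 + 1 + 1 + ⋯). Then q(P)[s](x) → −1/2 as x → ∞, where q(P) = 2(P − 1/2)P; i.e., the generalized Cesàro limit of s is −1/2. -/
open Filter intervalIntegral MeasureTheory

/-- The continuous Cesàro operator (real-valued version). -/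
noncomputable def cesaroPR (f : ℝ → ℝ) : ℝ → ℝ :=
  fun x => (1 / x) * ∫ t in (0 : ℝ)..x, f t

/-- The partial-sum function of `1 + 1 + 1 + ⋯`, i.e. `s(x) = ⌊x⌋`. -/
noncomputable def onesPartialSum : ℝ → ℝ := fun x => (⌊x⌋ : ℝ)

lemma floor_mono' : Monotone onesPartialSum := fun a b h => by
  simpa [onesPartialSum] using Int.floor_mono h

lemma floor_ii (a b : ℝ) : IntervalIntegrable onesPartialSum volume a b :=
  floor_mono'.intervalIntegrable

lemma integral_floor_piece (m : ℤ) (b : ℝ) (h1 : (m:ℝ) ≤ b) (h2 : b ≤ m+1) :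
    ∫ t in (m:ℝ)..b, onesPartialSum t = m * (b - m) := by
  have : ∫ t in (m:ℝ)..b, onesPartialSum t = ∫ t in (m:ℝ)..b, (m:ℝ) := by
    apply intervalIntegral.integral_congr_ae
    have hae : ∀ᵐ t : ℝ, t ≠ ((m:ℝ)+1) := by
      rw [MeasureTheory.ae_iff]
      simp
    filter_upwards [hae] with t ht hmem
    rw [Set.uIoc_of_le h1] at hmem
    have h3 : t < (m:ℝ) + 1 := lt_of_le_of_ne (hmem.2.trans h2) ht
    simp only [onesPartialSum]
    norm_cast
    rw [Int.floor_eq_iff]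
    exact ⟨le_of_lt hmem.1, by exact_mod_cast h3⟩
  rw [this, intervalIntegral.integral_const, smul_eq_mul, mul_comm]

lemma integral_floor_nat (n : ℕ) :
    ∫ t in (0:ℝ)..(n:ℝ), onesPartialSum t = n * (n-1) / 2 := by
  induction n with
  | zero => simp
  | succ n ih =>
    have hsplit : ∫ t in (0:ℝ)..((n+1:ℕ):ℝ), onesPartialSum t
        = (∫ t in (0:ℝ)..(n:ℝ), onesPartialSum t)
          + ∫ t in (n:ℝ)..((n:ℝ)+1), onesPartialSum t := by
      push_cast
      rw [intervalIntegral.integral_add_adjacent_intervals (floor_ii _ _) (floor_ii _ _)]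
    have hp := integral_floor_piece (n : ℤ) ((n:ℝ)+1) (by push_cast; linarith) (by push_cast; linarith)
    push_cast at hp hsplit ⊢
    rw [hsplit, ih, hp]
    ring

lemma integral_floor (x : ℝ) (hx : 0 ≤ x) :
    ∫ t in (0:ℝ)..x, onesPartialSum t
      = ⌊x⌋ * x - ⌊x⌋ * (⌊x⌋ + 1) / 2 := by
  have hk : (0:ℤ) ≤ ⌊x⌋ := Int.floor_nonneg.mpr hx
  obtain ⟨n, hn⟩ := Int.eq_ofNat_of_zero_le hk
  have hkx : ((⌊x⌋:ℤ):ℝ) ≤ x := Int.floor_le x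
  have hsplit : ∫ t in (0:ℝ)..x, onesPartialSum t
      = (∫ t in (0:ℝ)..((⌊x⌋:ℤ):ℝ), onesPartialSum t)
        + ∫ t in ((⌊x⌋:ℤ):ℝ)..x, onesPartialSum t := by
    rw [intervalIntegral.integral_add_adjacent_intervals (floor_ii _ _) (floor_ii _ _)]
  have h1 : ∫ t in (0:ℝ)..((⌊x⌋:ℤ):ℝ), onesPartialSum t = ⌊x⌋ * (⌊x⌋ - 1) / 2 := by
    rw [hn]; push_cast
    exact_mod_cast integral_floor_nat n
  have h2 := integral_floor_piece ⌊x⌋ x hkx (le_of_lt (Int.lt_floor_add_one x))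
  rw [hsplit, h1, h2]
  ring

noncomputable def hfun : ℝ → ℝ :=
  fun t => Int.fract t * (1 - Int.fract t) / (2 * t)

lemma cesaro_eq (x : ℝ) (hx : 0 < x) :
    cesaroPR onesPartialSum x = x/2 - 1/2 + hfun x := by
  have hfl := integral_floor x hx.le
  have hfr : Int.fract x = x - ⌊x⌋ := rfl
  simp only [cesaroPR, hfun]
  rw [hfl, show ((⌊x⌋:ℤ):ℝ) = x - Int.fract x from (Int.self_sub_fract x).symm]
  field_simp
  rw [hfr]
  ring

lemma hfun_zero : hfun 0 = 0 := by simp [hfun]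

lemma hfun_nonneg (x : ℝ) (hx : 0 ≤ x) : 0 ≤ hfun x := by
  rcases eq_or_lt_of_le hx with h | h
  · simp [← h, hfun_zero]
  · apply div_nonneg _ (by linarith)
    have := Int.fract_nonneg x
    have := Int.fract_lt_one x
    nlinarith

lemma hfun_le_half (x : ℝ) (hx : 0 ≤ x) : hfun x ≤ 1/2 := by
  rcases eq_or_lt_of_le hx with h | h
  · simp [← h, hfun_zero]
  · rw [hfun, div_le_iff₀ (by linarith)]
    have h1 := Int.fract_nonneg x
    have h2 := Int.fract_lt_one x
    rcases le_or_gt 1 x with h3 | h3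
    · nlinarith
    · have : Int.fract x = x := Int.fract_eq_self.mpr ⟨hx, h3⟩
      nlinarith

lemma hfun_le (x : ℝ) (hx : 1 ≤ x) : hfun x ≤ 1/(8*x) := by
  rw [hfun, div_le_div_iff₀ (by linarith) (by linarith)]
  have h1 := Int.fract_nonneg x
  have h2 := Int.fract_lt_one x
  nlinarith [mul_nonneg (by linarith : (0:ℝ) ≤ x) (sq_nonneg (2*Int.fract x - 1))]

lemma hfun_measurable : Measurable hfun := by
  apply Measurable.div
  · exact (measurable_fract.mul (measurable_const.sub measurable_fract))
  · exact measurable_const.mul measurable_id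

lemma hfun_ii (a b : ℝ) (ha : 0 ≤ a) (hb : 0 ≤ b) :
    IntervalIntegrable hfun volume a b := by
  apply IntervalIntegrable.mono_fun' (g := fun _ => (1:ℝ)/2)
    (intervalIntegrable_const) hfun_measurable.aestronglyMeasurable.restrict
  filter_upwards [MeasureTheory.ae_restrict_mem measurableSet_uIoc] with t ht
  have ht0 : 0 ≤ t := by
    rcases Set.mem_uIoc.mp ht with h | h
    · exact le_of_lt (lt_of_le_of_lt ha h.1)
    · exact le_of_lt (lt_of_le_of_lt hb h.1)
  rw [Real.norm_eq_abs, abs_of_nonneg (hfun_nonneg t ht0)]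
  exact hfun_le_half t ht0

noncomputable def Hfun (x : ℝ) : ℝ := ∫ t in (0:ℝ)..x, hfun t

lemma Hfun_nonneg (x : ℝ) (hx : 0 ≤ x) : 0 ≤ Hfun x :=
  intervalIntegral.integral_nonneg hx (fun t ht => hfun_nonneg t ht.1)

lemma Hfun_le (x : ℝ) (hx : 1 ≤ x) : Hfun x ≤ 1/2 + Real.log x / 8 := by
  have h01 := hfun_ii 0 1 le_rfl zero_le_one
  have h1x := hfun_ii 1 x zero_le_one (by linarith)
  have hsplit : Hfun x = (∫ t in (0:ℝ)..1, hfun t) + ∫ t in (1:ℝ)..x, hfun t := by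
    rw [Hfun, intervalIntegral.integral_add_adjacent_intervals h01 h1x]
  have hb1 : (∫ t in (0:ℝ)..1, hfun t) ≤ ∫ t in (0:ℝ)..1, (1:ℝ)/2 :=
    intervalIntegral.integral_mono_on zero_le_one h01 intervalIntegrable_const
      (fun t ht => hfun_le_half t ht.1)
  have hcont : IntervalIntegrable (fun t => 1/(8*t)) volume 1 x := by
    apply ContinuousOn.intervalIntegrable
    apply ContinuousOn.div continuousOn_const
    · exact (continuous_const.mul continuous_id).continuousOn
    · intro t ht
      rw [Set.uIcc_of_le hx] at ht
      have : (1:ℝ) ≤ t := ht.1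
      positivity
  have hb2 : (∫ t in (1:ℝ)..x, hfun t) ≤ ∫ t in (1:ℝ)..x, 1/(8*t) :=
    intervalIntegral.integral_mono_on hx h1x hcont (fun t ht => hfun_le t ht.1)
  have hval : (∫ t in (1:ℝ)..x, 1/(8*t)) = Real.log x / 8 := by
    have h8 : (∫ t in (1:ℝ)..x, 1/(8*t)) = (1/8) * ∫ t in (1:ℝ)..x, 1/t := by
      rw [← intervalIntegral.integral_const_mul]
      congr 1; ext t; ring
    rw [h8, integral_one_div]
    · rw [div_one]; ring
    · rw [Set.uIcc_of_le hx]
      intro h; exact absurd h.1 (by norm_num)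
  have hc : (∫ t in (0:ℝ)..1, (1:ℝ)/2) = 1/2 := by simp
  rw [hsplit]
  rw [hval] at hb2
  rw [hc] at hb1
  linarith

lemma integral_cesaro (x : ℝ) (hx : 0 ≤ x) :
    ∫ t in (0:ℝ)..x, cesaroPR onesPartialSum t = x^2/4 - x/2 + Hfun x := by
  have hcongr : (∫ t in (0:ℝ)..x, cesaroPR onesPartialSum t)
      = ∫ t in (0:ℝ)..x, (t/2 - 1/2 + hfun t) := by
    apply intervalIntegral.integral_congr_ae
    filter_upwards with t ht
    rw [Set.uIoc_of_le hx] at ht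
    exact cesaro_eq t ht.1
  have hi1 : IntervalIntegrable (fun t : ℝ => t/2 - 1/2) volume 0 x :=
    ((continuous_id.div_const 2).sub continuous_const).intervalIntegrable 0 x
  have hlin : (∫ t in (0:ℝ)..x, (t/2 - 1/2)) = x^2/4 - x/2 := by
    rw [intervalIntegral.integral_sub (f := fun t : ℝ => t/2) (g := fun _ : ℝ => (1:ℝ)/2)
      ((continuous_id.div_const 2).intervalIntegrable 0 x) intervalIntegrable_const,
      intervalIntegral.integral_div, integral_id]
    simp
    ring
  rw [hcongr, intervalIntegral.integral_add hi1 (hfun_ii 0 x le_rfl hx), hlin, Hfun]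

/-- With `q(P) = 2(P - 1/2)P`, we have `q(P)[s](x) → -1/2`:
the generalized Cesàro sum of `1 + 1 + 1 + ⋯` is `-1/2`. -/
theorem generalized_cesaro_sum_ones :
    Tendsto (fun x : ℝ =>
        2 * (cesaroPR (cesaroPR onesPartialSum) x - (1 / 2) * cesaroPR onesPartialSum x))
      atTop (nhds (-(1 / 2))) := by
  have key : ∀ x : ℝ, 1 ≤ x →
      2 * (cesaroPR (cesaroPR onesPartialSum) x - (1 / 2) * cesaroPR onesPartialSum x)
        = -(1/2) + (2 * Hfun x / x - hfun x) := by
    intro x hx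
    have hx0 : (0:ℝ) < x := by linarith
    have h2 : cesaroPR (cesaroPR onesPartialSum) x = (1/x) * (x^2/4 - x/2 + Hfun x) := by
      rw [cesaroPR, integral_cesaro x hx0.le]
    rw [h2, cesaro_eq x hx0]
    field_simp
    ring
  have t3 : Tendsto hfun atTop (nhds 0) := by
    apply tendsto_of_tendsto_of_tendsto_of_le_of_le' tendsto_const_nhds
      (h := fun x : ℝ => 1/(8*x)) ?_ ?_ ?_
    · have : Tendsto (fun x : ℝ => 8*x) atTop atTop :=
        (tendsto_id.const_mul_atTop (by norm_num))
      exact Tendsto.div_atTop tendsto_const_nhds this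
    · filter_upwards [eventually_ge_atTop (0:ℝ)] with x hx using hfun_nonneg x hx
    · filter_upwards [eventually_ge_atTop (1:ℝ)] with x hx using hfun_le x hx
  have t2 : Tendsto (fun x : ℝ => 2 * Hfun x / x) atTop (nhds 0) := by
    apply tendsto_of_tendsto_of_tendsto_of_le_of_le' tendsto_const_nhds
      (h := fun x : ℝ => 2 * (1/2 + Real.log x / 8) / x) ?_ ?_ ?_
    · have h1 : Tendsto (fun x : ℝ => 1/x) atTop (nhds 0) := by
        simpa [one_div] using tendsto_inv_atTop_zero
      have h2 : Tendsto (fun x : ℝ => Real.log x / x) atTop (nhds 0) :=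
        Real.isLittleO_log_id_atTop.tendsto_div_nhds_zero
      have heq : (fun x : ℝ => 2 * (1/2 + Real.log x / 8) / x)
          = fun x : ℝ => 1/x + (Real.log x / x)/4 := by
        funext x; ring
      rw [heq]
      simpa using h1.add (h2.div_const 4)
    · filter_upwards [eventually_ge_atTop (1:ℝ)] with x hx
      have hx0 : (0:ℝ) < x := by linarith
      exact div_nonneg (by linarith [Hfun_nonneg x hx0.le]) hx0.le
    · filter_upwards [eventually_ge_atTop (1:ℝ)] with x hx
      have hx0 : (0:ℝ) < x := by linarith
      gcongr
      exact Hfun_le x hx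
  have tfinal : Tendsto (fun x : ℝ => -(1/2) + (2 * Hfun x / x - hfun x)) atTop
      (nhds (-(1/2))) := by
    simpa using (tendsto_const_nhds (x := -(1/2:ℝ))).add (t2.sub t3)
  exact tfinal.congr' (by
    filter_upwards [eventually_ge_atTop (1:ℝ)] with x hx
    exact (key x hx).symm)
end

section
/- For γ ∈ ℂ with 1 ≤ Re(γ) < 2, the function g(x) := x^γ − (k^γ + (γ/2) k^{γ−1}), where k = ⌊x⌋, satisfies P[g](x) → 0 as x → ∞; that is, x^γ is strongly Cesàro-asymptotic to k^γ + (γ/2)k^{γ−1}. -/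
/-!
On `[k, k + 1)` the integrand is `t ^ γ` minus the mean over `[k, k + 1]` of the tangent line of
`t ↦ t ^ γ` at `k`, so its integral over `[k, k + 1]` is the integral of a Taylor remainder, of size
`O(k ^ (Re γ - 2)) → 0`. Cesàro means of a null sequence are null, and the leftover integral over
`[⌊x⌋, x]` is `O(x ^ (Re γ - 1)) = o(x)` by the mean value theorem.
-/

open Filter intervalIntegral

open MeasureTheory Set Asymptotics Topology

section CesaroOperator

variable {f : ℝ → ℂ}

lemma tendsto_inv_mul_integral_zero_natFloor
    (hint : ∀ n : ℕ, IntervalIntegrable f volume n (n + 1))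
    (hlim : Tendsto (fun n : ℕ => ∫ t in (n : ℝ)..n + 1, f t) atTop (𝓝 0)) :
    Tendsto (fun x : ℝ => (x : ℂ)⁻¹ * ∫ t in (0 : ℝ)..⌊x⌋₊, f t) atTop (𝓝 0) := by
  have hsum (n : ℕ) :
      ∑ i ∈ Finset.range n, ∫ t in (i : ℝ)..i + 1, f t = ∫ t in (0 : ℝ)..n, f t := by
    simpa using sum_integral_adjacent_intervals (a := fun i : ℕ => (i : ℝ)) (fun i _ => by
      simpa using hint i)
  have hmean : Tendsto (fun n : ℕ => (n⁻¹ : ℝ) • ∫ t in (0 : ℝ)..n, f t) atTop (𝓝 0) := by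
    simpa only [hsum] using hlim.cesaro_smul
  have hratio := (tendsto_nat_floor_div_atTop (R := ℝ)).smul (hmean.comp tendsto_nat_floor_atTop)
  rw [one_smul] at hratio
  refine hratio.congr' ?_
  filter_upwards [eventually_ge_atTop 1] with x hx
  have hn : (⌊x⌋₊ : ℝ) ≠ 0 := (Nat.cast_pos.2 (Nat.floor_pos.2 hx)).ne'
  rw [Function.comp_apply, smul_smul, show (⌊x⌋₊ : ℝ) / x * (⌊x⌋₊ : ℝ)⁻¹ = x⁻¹ by field_simp,
    Complex.real_smul, Complex.ofReal_inv]

lemma tendsto_inv_mul_integral_natFloor_self (ho : f =o[atTop] fun t => (t : ℂ)) :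
    Tendsto (fun x : ℝ => (x : ℂ)⁻¹ * ∫ t in (⌊x⌋₊ : ℝ)..x, f t) atTop (𝓝 0) := by
  suffices (fun x : ℝ => ∫ t in (⌊x⌋₊ : ℝ)..x, f t) =o[atTop] fun x => (x : ℂ) by
    simpa only [div_eq_inv_mul] using this.tendsto_div_nhds_zero
  refine IsLittleO.of_bound fun c hc => ?_
  obtain ⟨T, hT⟩ := eventually_atTop.1 (ho.bound hc)
  filter_upwards [eventually_ge_atTop (max T 0 + 1)] with x hx
  have hTx : max T 0 ≤ ⌊x⌋₊ := by linarith [Nat.lt_floor_add_one x]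
  have hnx : (⌊x⌋₊ : ℝ) ≤ x := Nat.floor_le (by linarith [le_max_right T 0])
  have hx0 : 0 ≤ x := by linarith [le_max_right T 0]
  calc ‖∫ t in (⌊x⌋₊ : ℝ)..x, f t‖ ≤ c * x * |x - ⌊x⌋₊| := by
        refine norm_integral_le_of_norm_le_const fun t ht => ?_
        rw [uIoc_of_le hnx] at ht
        have ht0 : 0 ≤ t := by linarith [le_max_right T 0, ht.1]
        calc ‖f t‖ ≤ c * ‖(t : ℂ)‖ := hT t (by linarith [le_max_left T 0, ht.1])
          _ ≤ c * x := by
            rw [Complex.norm_real, Real.norm_of_nonneg ht0]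
            exact mul_le_mul_of_nonneg_left ht.2 hc.le
    _ ≤ c * x * 1 := by
        gcongr
        rw [abs_of_nonneg (by linarith)]
        linarith [Nat.lt_floor_add_one x]
    _ = c * ‖(x : ℂ)‖ := by rw [mul_one, Complex.norm_real, Real.norm_of_nonneg hx0]

theorem tendsto_cesaroP_zero (hint : ∀ n : ℕ, IntervalIntegrable f volume n (n + 1))
    (hlim : Tendsto (fun n : ℕ => ∫ t in (n : ℝ)..n + 1, f t) atTop (𝓝 0))
    (ho : f =o[atTop] fun t => (t : ℂ)) :
    Tendsto (cesaroP f) atTop (𝓝 0) := by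
  have hsplit := (tendsto_inv_mul_integral_zero_natFloor hint hlim).add
    (tendsto_inv_mul_integral_natFloor_self ho)
  rw [add_zero] at hsplit
  refine hsplit.congr' ?_
  filter_upwards [eventually_ge_atTop 0] with x hx
  have hnx : (⌊x⌋₊ : ℝ) ≤ x := Nat.floor_le hx
  have hint_floor : IntervalIntegrable f volume 0 ⌊x⌋₊ := by
    simpa using IntervalIntegrable.trans_iterate (a := fun i : ℕ => (i : ℝ)) fun i _ => by
      simpa using hint i
  have hint_self : IntervalIntegrable f volume ⌊x⌋₊ x := (hint ⌊x⌋₊).mono_set <| by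
    rw [uIcc_of_le hnx, uIcc_of_le (by linarith)]
    exact Icc_subset_Icc_right (Nat.lt_floor_add_one x).le
  rw [cesaroP, ← integral_add_adjacent_intervals hint_floor hint_self, one_div, mul_add]

end CesaroOperator

lemma isLittleO_rpow_id_atTop {s : ℝ} (hs : s < 1) : (fun t : ℝ => t ^ s) =o[atTop] fun t => t := by
  have hdecay : (fun t : ℝ => t ^ (s - 1)) =o[atTop] fun _ => (1 : ℝ) :=
    (isLittleO_one_iff ℝ).2 <| by
      simpa [neg_sub] using tendsto_rpow_neg_atTop (by linarith : 0 < 1 - s)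
  refine (hdecay.mul_isBigO (isBigO_refl (fun t : ℝ => t) atTop)).congr' ?_ (by simp)
  filter_upwards [eventually_gt_atTop 0] with t ht
  rw [← Real.rpow_add_one ht.ne', sub_add_cancel]

section CpowEstimates

lemma hasDerivAt_ofReal_cpow_const_of_pos {w : ℂ} {t : ℝ} (ht : 0 < t) :
    HasDerivAt (fun y : ℝ => (y : ℂ) ^ w) (w * (t : ℂ) ^ (w - 1)) t :=
  (Complex.hasStrictDerivAt_cpow_const (Complex.ofReal_mem_slitPlane.2 ht)).hasDerivAt.comp_ofReal

lemma norm_ofReal_cpow_sub_ofReal_cpow_le {w : ℂ} {a b C : ℝ} (ha : 0 < a) (hab : a ≤ b)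
    (hC : ∀ s ∈ Icc a b, s ^ (w.re - 1) ≤ C) :
    ‖(b : ℂ) ^ w - (a : ℂ) ^ w‖ ≤ ‖w‖ * C * (b - a) := by
  refine norm_image_sub_le_of_norm_deriv_le_segment'
    (fun s hs => (hasDerivAt_ofReal_cpow_const_of_pos (ha.trans_le hs.1)).hasDerivWithinAt)
    (fun s hs => ?_) b (right_mem_Icc.2 hab)
  rw [norm_mul, Complex.norm_cpow_eq_rpow_re_of_pos (ha.trans_le hs.1), Complex.sub_re,
    Complex.one_re]
  exact mul_le_mul_of_nonneg_left (hC s (Ico_subset_Icc_self hs)) (norm_nonneg w)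

lemma norm_ofReal_cpow_sub_tangent_le {γ : ℂ} (hγ : γ.re ≤ 2) {k t : ℝ} (hk : 0 < k) (hkt : k ≤ t) :
    ‖(t : ℂ) ^ γ - ((k : ℂ) ^ γ + γ * (k : ℂ) ^ (γ - 1) * (t - k))‖ ≤
      ‖γ‖ * ‖γ - 1‖ * k ^ (γ.re - 2) * (t - k) ^ 2 := by
  set C := ‖γ‖ * ‖γ - 1‖ * k ^ (γ.re - 2)
  have hderiv : ∀ s ∈ Icc k t,
      HasDerivWithinAt (fun y : ℝ => (y : ℂ) ^ γ - γ * (k : ℂ) ^ (γ - 1) * y)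
      (γ * (s : ℂ) ^ (γ - 1) - γ * (k : ℂ) ^ (γ - 1)) (Icc k t) s := fun s hs => by
    simpa using ((hasDerivAt_ofReal_cpow_const_of_pos (w := γ) (hk.trans_le hs.1)).fun_sub
      ((hasDerivAt_id s).ofReal_comp.const_mul (γ * (k : ℂ) ^ (γ - 1)))).hasDerivWithinAt
  have hbound : ∀ s ∈ Ico k t,
      ‖γ * (s : ℂ) ^ (γ - 1) - γ * (k : ℂ) ^ (γ - 1)‖ ≤ C * (t - k) := fun s hs => by
    have hpow : ‖(s : ℂ) ^ (γ - 1) - (k : ℂ) ^ (γ - 1)‖ ≤ ‖γ - 1‖ * k ^ (γ.re - 2) * (s - k) :=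
      norm_ofReal_cpow_sub_ofReal_cpow_le hk hs.1 fun u hu => by
        rw [Complex.sub_re, Complex.one_re, sub_sub, one_add_one_eq_two]
        exact Real.rpow_le_rpow_of_nonpos hk hu.1 (by linarith)
    rw [← mul_sub, norm_mul]
    simp only [C, mul_assoc]
    gcongr
    calc _ ≤ ‖γ - 1‖ * k ^ (γ.re - 2) * (s - k) := hpow
      _ ≤ _ := by rw [← mul_assoc]; gcongr; exact hs.2.le
  calc _ = ‖((t : ℂ) ^ γ - γ * (k : ℂ) ^ (γ - 1) * t) -
        ((k : ℂ) ^ γ - γ * (k : ℂ) ^ (γ - 1) * k)‖ := by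
        congr 1; ring
    _ ≤ C * (t - k) * (t - k) :=
        norm_image_sub_le_of_norm_deriv_le_segment' hderiv hbound t (right_mem_Icc.2 hkt)
    _ = C * (t - k) ^ 2 := by ring

end CpowEstimates

section TangentMean

variable {γ : ℂ}

noncomputable def tangentMean (γ : ℂ) (k : ℝ) : ℂ :=
  (k : ℂ) ^ γ + (γ / 2) * (k : ℂ) ^ (γ - 1)

lemma integral_tangent_eq_tangentMean (γ : ℂ) (k : ℝ) :
    ∫ t in k..k + 1, ((k : ℂ) ^ γ + γ * (k : ℂ) ^ (γ - 1) * (t - k)) = tangentMean γ k := by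
  have hmean : ∫ t in k..k + 1, ((t : ℂ) - k) = 1 / 2 := by
    simp_rw [← Complex.ofReal_sub]
    rw [intervalIntegral.integral_ofReal, intervalIntegral.integral_comp_sub_right fun t => t]
    norm_num
  rw [integral_add intervalIntegrable_const
    (Continuous.intervalIntegrable (by fun_prop) _ _), intervalIntegral.integral_const_mul, hmean,
    intervalIntegral.integral_const]
  simp only [add_sub_cancel_left, one_smul, tangentMean]
  ring

lemma sub_tangentMean_floor_eqOn (γ : ℂ) (n : ℕ) :
    EqOn (fun t : ℝ => (t : ℂ) ^ γ - tangentMean γ ⌊t⌋) (fun t => (t : ℂ) ^ γ - tangentMean γ n)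
      (uIoo (n : ℝ) (n + 1)) := fun t ht => by
  rw [uIoo_of_le (by linarith)] at ht
  have : ⌊t⌋ = n := Int.floor_eq_iff.2 ⟨by exact_mod_cast ht.1.le, by exact_mod_cast ht.2⟩
  simp [this]

lemma norm_integral_sub_tangentMean_floor_le (hγ : γ.re ≤ 2) {n : ℕ} (hn : 0 < n) :
    ‖∫ t in (n : ℝ)..n + 1, ((t : ℂ) ^ γ - tangentMean γ ⌊t⌋)‖ ≤
      ‖γ‖ * ‖γ - 1‖ * (n : ℝ) ^ (γ.re - 2) := by
  have hk : (0 : ℝ) < n := by exact_mod_cast hn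
  have hpow : IntervalIntegrable (fun t : ℝ => (t : ℂ) ^ γ) volume n (n + 1) :=
    ContinuousOn.intervalIntegrable fun t ht => by
      rw [uIcc_of_le (by linarith)] at ht
      exact (hasDerivAt_ofReal_cpow_const_of_pos (hk.trans_le ht.1)).continuousAt.continuousWithinAt
  have htangent : IntervalIntegrable
      (fun t : ℝ => ((n : ℝ) : ℂ) ^ γ + γ * ((n : ℝ) : ℂ) ^ (γ - 1) * (t - (n : ℝ)))
      volume n (n + 1) :=
    Continuous.intervalIntegrable (by fun_prop) _ _
  calc ‖∫ t in (n : ℝ)..n + 1, ((t : ℂ) ^ γ - tangentMean γ ⌊t⌋)‖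
      = ‖∫ t in (n : ℝ)..n + 1,
          ((t : ℂ) ^ γ - (((n : ℝ) : ℂ) ^ γ + γ * ((n : ℝ) : ℂ) ^ (γ - 1) * (t - (n : ℝ))))‖ := by
        rw [integral_congr_uIoo (sub_tangentMean_floor_eqOn γ n), integral_sub hpow
          intervalIntegrable_const, integral_sub hpow htangent, intervalIntegral.integral_const,
          ← integral_tangent_eq_tangentMean, add_sub_cancel_left, one_smul]
    _ ≤ ‖γ‖ * ‖γ - 1‖ * (n : ℝ) ^ (γ.re - 2) * |(n + 1 : ℝ) - n| := by
        refine norm_integral_le_of_norm_le_const fun t ht => ?_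
        rw [uIoc_of_le (by linarith)] at ht
        refine (norm_ofReal_cpow_sub_tangent_le hγ hk ht.1.le).trans
          (mul_le_of_le_one_right (by positivity) ?_)
        exact pow_le_one₀ (by linarith [ht.1]) (by linarith [ht.2])
    _ = ‖γ‖ * ‖γ - 1‖ * (n : ℝ) ^ (γ.re - 2) := by simp

lemma tendsto_integral_sub_tangentMean_floor (hγ : γ.re < 2) :
    Tendsto (fun n : ℕ => ∫ t in (n : ℝ)..n + 1, ((t : ℂ) ^ γ - tangentMean γ ⌊t⌋))
      atTop (𝓝 0) := by
  have hdecay : Tendsto (fun n : ℕ => ‖γ‖ * ‖γ - 1‖ * (n : ℝ) ^ (γ.re - 2)) atTop (𝓝 0) := by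
    simpa [neg_sub] using ((tendsto_rpow_neg_atTop (by linarith : 0 < 2 - γ.re)).comp
      tendsto_natCast_atTop_atTop).const_mul (‖γ‖ * ‖γ - 1‖)
  refine squeeze_zero_norm' ?_ hdecay
  filter_upwards [eventually_gt_atTop 0] with n hn
  exact norm_integral_sub_tangentMean_floor_le hγ.le hn

lemma intervalIntegrable_sub_tangentMean_floor (hγ : 0 < γ.re) (n : ℕ) :
    IntervalIntegrable (fun t : ℝ => (t : ℂ) ^ γ - tangentMean γ ⌊t⌋) volume n (n + 1) :=
  (((Complex.continuous_ofReal_cpow_const hγ).sub continuous_const).intervalIntegrable _ _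
    ).congr_uIoo (sub_tangentMean_floor_eqOn γ n).symm

lemma norm_sub_tangentMean_floor_le (hγ : 1 ≤ γ.re) {t : ℝ} (ht : 1 ≤ t) :
    ‖(t : ℂ) ^ γ - tangentMean γ ⌊t⌋‖ ≤ 2 * ‖γ‖ * t ^ (γ.re - 1) := by
  have hk : (1 : ℝ) ≤ ⌊t⌋ := by exact_mod_cast Int.le_floor.2 (by exact_mod_cast ht)
  have hkt : (⌊t⌋ : ℝ) ≤ t := Int.floor_le t
  have hpow_mono : (⌊t⌋ : ℝ) ^ (γ.re - 1) ≤ t ^ (γ.re - 1) :=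
    Real.rpow_le_rpow (by linarith) hkt (by linarith)
  have hdiff : ‖(t : ℂ) ^ γ - (⌊t⌋ : ℂ) ^ γ‖ ≤ ‖γ‖ * t ^ (γ.re - 1) :=
    (norm_ofReal_cpow_sub_ofReal_cpow_le (by linarith) hkt fun s hs =>
      Real.rpow_le_rpow (by linarith [hs.1]) hs.2 (by linarith)).trans
        (mul_le_of_le_one_right (by positivity) (by linarith [Int.lt_floor_add_one t]))
  have hcorr : ‖(γ / 2) * ((⌊t⌋ : ℝ) : ℂ) ^ (γ - 1)‖ ≤ ‖γ‖ * t ^ (γ.re - 1) := by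
    rw [norm_mul, norm_div, Complex.norm_ofNat,
      Complex.norm_cpow_eq_rpow_re_of_pos (by linarith), Complex.sub_re, Complex.one_re]
    have : 0 ≤ (⌊t⌋ : ℝ) ^ (γ.re - 1) := by positivity
    nlinarith [norm_nonneg γ]
  calc _ = ‖((t : ℂ) ^ γ - (⌊t⌋ : ℂ) ^ γ) - (γ / 2) * ((⌊t⌋ : ℝ) : ℂ) ^ (γ - 1)‖ := by
        rw [tangentMean]; push_cast; ring_nf
    _ ≤ _ := (norm_sub_le _ _).trans (by linarith)

lemma isLittleO_sub_tangentMean_floor (h1 : 1 ≤ γ.re) (h2 : γ.re < 2) :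
    (fun t : ℝ => (t : ℂ) ^ γ - tangentMean γ ⌊t⌋) =o[atTop] fun t => (t : ℂ) := by
  have hO : (fun t : ℝ => (t : ℂ) ^ γ - tangentMean γ ⌊t⌋) =O[atTop] fun t => t ^ (γ.re - 1) :=
    IsBigO.of_bound (2 * ‖γ‖) <| by
      filter_upwards [eventually_ge_atTop 1] with t ht
      rw [Real.norm_of_nonneg (by positivity)]
      exact norm_sub_tangentMean_floor_le h1 ht
  exact Complex.isLittleO_ofReal_right.2 <|
    hO.trans_isLittleO <| isLittleO_rpow_id_atTop (by linarith)

end TangentMean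

/-- For `1 ≤ Re γ < 2`, with `k = ⌊x⌋`, the function
`g(x) = x^γ - (k^γ + (γ/2) k^(γ-1))` satisfies `P[g](x) → 0` as `x → ∞`:
`x^γ` is strongly Cesàro-asymptotic to `k^γ + (γ/2)k^(γ-1)`. -/
theorem strong_cesaro_asymptotic_pow (γ : ℂ) (h1 : 1 ≤ γ.re) (h2 : γ.re < 2) :
    Tendsto
      (cesaroP (fun x : ℝ =>
        (x : ℂ) ^ γ - (((⌊x⌋ : ℝ) : ℂ) ^ γ + (γ / 2) * ((⌊x⌋ : ℝ) : ℂ) ^ (γ - 1))))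
      atTop (nhds 0) :=
  tendsto_cesaroP_zero (intervalIntegrable_sub_tangentMean_floor (by linarith))
    (tendsto_integral_sub_tangentMean_floor h2) (isLittleO_sub_tangentMean_floor h1 h2)
end

section
/- For s ∈ ℂ with −1 < Re(s) ≤ 0, the limit lim_{k→∞} ( ∑_{j=1}^{k} j^{−s} − k^{1−s}/(1−s) − (1/2)k^{−s} ) exists and equals ζ(s). -/
/-!
For `s ≠ 1` the corrected partial sum up to `m + 1` telescopes into `1/2 - 1/(1 - s)` plus the
errors of the trapezoidal rule for `t ↦ t^{-s}` on the intervals `[j, j + 1]`, `1 ≤ j ≤ m`. The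
second-derivative bound for the trapezoidal rule makes these errors `O(j^{-Re s - 2})`, so the
series converges locally uniformly on `Re s > -1` to a function `Z`, holomorphic there away from
`s = 1`. For `Re s > 1` the correction terms tend to `0` and the partial sums to `ζ s`, so `Z = ζ`
there, and hence on the whole punctured half-plane by the identity theorem.
-/

open Filter Set Complex Topology

theorem norm_trapezoid_sub_integral_le {E : Type*} [NormedAddCommGroup E] [NormedSpace ℝ E]
    [CompleteSpace E] {f f' f'' : ℝ → E} {a b M : ℝ} (hab : a ≤ b)
    (hf : ∀ t ∈ Icc a b, HasDerivAt f (f' t) t) (hf' : ∀ t ∈ Icc a b, HasDerivAt f' (f'' t) t)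
    (hf'' : ∀ t ∈ Icc a b, ‖f'' t‖ ≤ M) :
    ‖((b - a) / 2) • (f a + f b) - ∫ t in a..b, f t‖ ≤ M / 4 * (b - a) ^ 3 := by
  set m := (a + b) / 2 with hm_def
  have hm : m ∈ Icc a b := ⟨by linarith, by linarith⟩
  have hf'_cont : ContinuousOn f' (Icc a b) := fun t ht ↦
    (hf' t ht).continuousAt.continuousWithinAt
  have hkernel_int : IntervalIntegrable (fun t ↦ (t - m) • f' t) MeasureTheory.volume a b :=
    ((continuousOn_id.sub continuousOn_const).smul hf'_cont).intervalIntegrable_of_Icc hab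
  -- integration by parts against the kernel `t - m`, which has mean zero on `[a, b]`
  have hpeano : ((b - a) / 2) • (f a + f b) - ∫ t in a..b, f t
      = ∫ t in a..b, (t - m) • (f' t - f' m) := by
    have hibp := intervalIntegral.integral_smul_deriv_eq_deriv_smul (u := fun t ↦ t - m)
      (u' := fun _ ↦ (1 : ℝ)) (fun t _ ↦ (hasDerivAt_id t).sub_const m)
      (fun t ht ↦ hf t (uIcc_of_le hab ▸ ht))
      intervalIntegrable_const (hf'_cont.intervalIntegrable_of_Icc hab)
    have hkernel : ∫ t in a..b, (t - m) = 0 := by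
      rw [intervalIntegral.integral_sub intervalIntegral.intervalIntegrable_id
        intervalIntegrable_const]
      simp only [integral_id, intervalIntegral.integral_const, smul_eq_mul, hm_def]
      ring
    simp only [smul_sub]
    rw [intervalIntegral.integral_sub (g := fun t ↦ (t - m) • f' m) hkernel_int
      ((by fun_prop : Continuous fun t ↦ (t - m) • f' m).intervalIntegrable a b),
      intervalIntegral.integral_smul_const, hkernel, zero_smul, sub_zero, hibp]
    simp only [one_smul, hm_def, smul_add]
    rw [show b - (a + b) / 2 = (b - a) / 2 by ring, show a - (a + b) / 2 = -((b - a) / 2) by ring,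
      neg_smul]
    abel
  have hM : 0 ≤ M := (norm_nonneg _).trans (hf'' a ⟨le_rfl, hab⟩)
  have hlip : ∀ t ∈ Icc a b, ‖f' t - f' m‖ ≤ M * |t - m| := fun t ht ↦
    (convex_Icc a b).norm_image_sub_le_of_norm_hasDerivWithin_le
      (fun u hu ↦ (hf' u hu).hasDerivWithinAt) hf'' hm ht
  have hbound : ∀ t ∈ uIoc a b, ‖(t - m) • (f' t - f' m)‖ ≤ M * ((b - a) / 2) ^ 2 := by
    intro t ht
    have ht' : t ∈ Icc a b := Ioc_subset_Icc_self (uIoc_of_le hab ▸ ht)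
    have hdist : |t - m| ≤ (b - a) / 2 := abs_le.2 ⟨by linarith [ht'.1], by linarith [ht'.2]⟩
    calc ‖(t - m) • (f' t - f' m)‖ = |t - m| * ‖f' t - f' m‖ := by
          rw [norm_smul, Real.norm_eq_abs]
      _ ≤ |t - m| * (M * |t - m|) := by gcongr; exact hlip t ht'
      _ = M * |t - m| ^ 2 := by ring
      _ ≤ M * ((b - a) / 2) ^ 2 := by gcongr
  calc _ = ‖∫ t in a..b, (t - m) • (f' t - f' m)‖ := by rw [hpeano]
    _ ≤ M * ((b - a) / 2) ^ 2 * |b - a| :=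
        intervalIntegral.norm_integral_le_of_norm_le_const hbound
    _ = M / 4 * (b - a) ^ 3 := by rw [abs_of_nonneg (sub_nonneg.2 hab)]; ring

lemma isPreconnected_re_gt_diff_singleton {a : ℝ} {p : ℂ} (hp : a < p.re) :
    IsPreconnected ({z : ℂ | a < z.re} \ {p}) := by
  have hH : Convex ℝ {z : ℂ | a < z.re} := convex_halfSpace_re_gt a
  have hL := (hH.inter (convex_halfSpace_re_lt p.re)).isPreconnected
  have hR := (hH.inter (convex_halfSpace_re_gt p.re)).isPreconnected
  have hD := (hH.inter (convex_halfSpace_im_lt p.im)).isPreconnected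
  have hU := (hH.inter (convex_halfSpace_im_gt p.im)).isPreconnected
  have hset : {z : ℂ | a < z.re} \ {p} = {z | a < z.re} ∩ {z | z.re < p.re}
      ∪ {z | a < z.re} ∩ {z | z.im < p.im} ∪ {z | a < z.re} ∩ {z | p.re < z.re}
      ∪ {z | a < z.re} ∩ {z | p.im < z.im} := by
    ext z
    simp only [Set.mem_sdiff, Set.mem_singleton_iff, mem_union, mem_inter_iff, mem_ofPred_eq,
      Complex.ext_iff, not_and_or]
    constructor
    · rintro ⟨hz, hre | him⟩
      · rcases lt_or_gt_of_ne hre with h | h <;> tauto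
      · rcases lt_or_gt_of_ne him with h | h <;> tauto
    · rintro (((⟨hz, h⟩ | ⟨hz, h⟩) | ⟨hz, h⟩) | ⟨hz, h⟩)
      exacts [⟨hz, .inl h.ne⟩, ⟨hz, .inr h.ne⟩, ⟨hz, .inl h.ne'⟩, ⟨hz, .inr h.ne'⟩]
  rw [hset]
  refine ((hL.union ⟨(a + p.re) / 2, p.im - 1⟩ ?_ ?_ hD).union ⟨p.re + 1, p.im - 1⟩ ?_ ?_
    hR).union ⟨p.re + 1, p.im + 1⟩ ?_ ?_ hU
  all_goals simp only [mem_union, mem_inter_iff, mem_ofPred_eq]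
  all_goals first | exact ⟨by linarith, by linarith⟩ | exact .inr ⟨by linarith, by linarith⟩

lemma summable_nat_add_one_rpow {p : ℝ} (hp : p < -1) :
    Summable fun j : ℕ ↦ ((j : ℝ) + 1) ^ p := by
  simpa using (summable_nat_add_iff 1).2 (Real.summable_nat_rpow.2 hp)

lemma tendsto_natCast_cpow_of_re_neg {w : ℂ} (hw : w.re < 0) :
    Tendsto (fun k : ℕ ↦ (k : ℂ) ^ w) atTop (𝓝 0) := by
  refine squeeze_zero_norm' ?_ ((tendsto_rpow_neg_atTop (neg_pos.2 hw)).comp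
    tendsto_natCast_atTop_atTop)
  filter_upwards [eventually_gt_atTop 0] with k hk
  simp [norm_natCast_cpow_of_pos hk]

lemma hasDerivAt_ofReal_cpow_of_pos {x : ℝ} (hx : 0 < x) (r : ℂ) :
    HasDerivAt (fun t : ℝ ↦ (t : ℂ) ^ r) (r * (x : ℂ) ^ (r - 1)) x := by
  simpa using ((hasDerivAt_id (x : ℂ)).cpow_const (ofReal_mem_slitPlane.2 hx)).comp_ofReal

/-- The error of the trapezoidal rule for `t ↦ t ^ (-s)` on `[x, x + 1]`, with the integral in
closed form so that it is visibly holomorphic in `s ≠ 1` (at `s = 1` the division is junk). -/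
noncomputable def trapezoidError (s : ℂ) (x : ℝ) : ℂ :=
  ((x : ℂ) ^ (-s) + ((x : ℂ) + 1) ^ (-s)) / 2
    - (((x : ℂ) + 1) ^ (1 - s) - (x : ℂ) ^ (1 - s)) / (1 - s)

lemma trapezoidError_eq_sub_integral {s : ℂ} (hs : s ≠ 1) {x : ℝ} (hx : 0 < x) :
    trapezoidError s x = ((x : ℂ) ^ (-s) + ((x : ℂ) + 1) ^ (-s)) / 2
      - ∫ t in x..x + 1, (t : ℂ) ^ (-s) := by
  have h0 : (0 : ℝ) ∉ uIcc x (x + 1) := by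
    rw [uIcc_of_le (by linarith)]; exact fun h ↦ by linarith [h.1]
  rw [integral_cpow (Or.inr ⟨fun h ↦ hs (neg_inj.1 h), h0⟩), trapezoidError]
  push_cast
  ring_nf

lemma norm_trapezoidError_le {s : ℂ} (hs : s ≠ 1) (hre : -2 ≤ s.re) {x : ℝ} (hx : 0 < x) :
    ‖trapezoidError s x‖ ≤ ‖s‖ * ‖s + 1‖ / 4 * x ^ (-s.re - 2) := by
  have hpos : ∀ t ∈ Icc x (x + 1), 0 < t := fun t ht ↦ hx.trans_le ht.1
  have hf'' : ∀ t ∈ Icc x (x + 1),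
      ‖-s * ((-s - 1) * (t : ℂ) ^ (-s - 1 - 1))‖ ≤ ‖s‖ * ‖s + 1‖ * x ^ (-s.re - 2) := by
    intro t ht
    rw [norm_mul, norm_mul, norm_neg, ← norm_neg (-s - 1),
      norm_cpow_eq_rpow_re_of_pos (hpos t ht)]
    simp only [neg_sub', sub_neg_eq_add, neg_neg, sub_re, neg_re, one_re]
    rw [← mul_assoc, show -s.re - 1 - 1 = -s.re - 2 by ring]
    exact mul_le_mul_of_nonneg_left (Real.rpow_le_rpow_of_nonpos hx ht.1 (by linarith))
      (by positivity)
  have := norm_trapezoid_sub_integral_le (by linarith)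
    (fun t ht ↦ hasDerivAt_ofReal_cpow_of_pos (hpos t ht) (-s))
    (fun t ht ↦ (hasDerivAt_ofReal_cpow_of_pos (hpos t ht) (-s - 1)).const_mul (-s)) hf''
  calc ‖trapezoidError s x‖
      = ‖((x + 1 - x) / 2) • ((x : ℂ) ^ (-s) + ((x + 1 : ℝ) : ℂ) ^ (-s))
          - ∫ t in x..x + 1, (t : ℂ) ^ (-s)‖ := by
        rw [trapezoidError_eq_sub_integral hs hx, add_sub_cancel_left, Complex.real_smul]
        push_cast
        ring_nf
    _ ≤ ‖s‖ * ‖s + 1‖ * x ^ (-s.re - 2) / 4 * (x + 1 - x) ^ 3 := this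
    _ = ‖s‖ * ‖s + 1‖ / 4 * x ^ (-s.re - 2) := by ring

lemma norm_trapezoidError_natCast_add_one_le {s : ℂ} (hs : s ≠ 1) {a R : ℝ} (ha : -2 ≤ a)
    (has : a ≤ s.re) (hsR : ‖s‖ ≤ R) (j : ℕ) :
    ‖trapezoidError s (j + 1)‖ ≤ R * (R + 1) / 4 * ((j : ℝ) + 1) ^ (-a - 2) := by
  have hj : (1 : ℝ) ≤ j + 1 := by simp
  calc ‖trapezoidError s (j + 1)‖ ≤ ‖s‖ * ‖s + 1‖ / 4 * ((j : ℝ) + 1) ^ (-s.re - 2) :=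
        norm_trapezoidError_le hs (ha.trans has) (by positivity)
    _ ≤ R * (R + 1) / 4 * ((j : ℝ) + 1) ^ (-a - 2) := by
        have hs1 : ‖s + 1‖ ≤ R + 1 := (norm_add_le _ _).trans (by simpa using hsR)
        have hs0 : ‖s‖ * ‖s + 1‖ / 4 ≤ R * (R + 1) / 4 := by gcongr; linarith [norm_nonneg s]
        exact mul_le_mul hs0 (Real.rpow_le_rpow_of_exponent_le hj (by linarith)) (by positivity)
          (hs0.trans' (by positivity))

noncomputable def correctedZetaPartialSum (s : ℂ) (k : ℕ) : ℂ :=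
  (∑ j ∈ Finset.Icc 1 k, (j : ℂ) ^ (-s)) - (k : ℂ) ^ (1 - s) / (1 - s)
    - (1 / 2) * (k : ℂ) ^ (-s)

noncomputable def zetaTrapezoid (s : ℂ) : ℂ :=
  ∑' j : ℕ, trapezoidError s (j + 1) + 1 / 2 - 1 / (1 - s)

lemma correctedZetaPartialSum_succ (s : ℂ) (m : ℕ) :
    correctedZetaPartialSum s (m + 1)
      = ∑ j ∈ Finset.range m, trapezoidError s (j + 1) + 1 / 2 - 1 / (1 - s) := by
  induction m with
  | zero => simp [correctedZetaPartialSum]; ring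
  | succ m ih =>
    have hstep : correctedZetaPartialSum s (m + 1 + 1)
        = correctedZetaPartialSum s (m + 1) + trapezoidError s (m + 1) := by
      simp only [correctedZetaPartialSum, trapezoidError,
        Finset.sum_Icc_succ_top (by omega : 1 ≤ m + 1 + 1)]
      push_cast
      ring
    rw [hstep, ih, Finset.sum_range_succ]
    ring

lemma tendsto_correctedZetaPartialSum {s : ℂ} (hs : s ≠ 1) (hre : -1 < s.re) :
    Tendsto (correctedZetaPartialSum s) atTop (𝓝 (zetaTrapezoid s)) := by
  have hsum : Summable fun j : ℕ ↦ trapezoidError s (j + 1) :=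
    .of_norm_bounded ((summable_nat_add_one_rpow (by linarith)).mul_left _)
      (norm_trapezoidError_natCast_add_one_le hs (by linarith) le_rfl le_rfl)
  rw [← tendsto_add_atTop_iff_nat 1]
  simp only [correctedZetaPartialSum_succ]
  exact (hsum.hasSum.tendsto_sum_nat.add_const _).sub_const _

lemma tendsto_sum_Icc_cpow_neg_riemannZeta {s : ℂ} (hs : 1 < s.re) :
    Tendsto (fun k : ℕ ↦ ∑ j ∈ Finset.Icc 1 k, (j : ℂ) ^ (-s)) atTop (𝓝 (riemannZeta s)) := by
  have hsum : Summable fun n : ℕ ↦ 1 / ((n : ℂ) + 1) ^ s := by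
    simpa only [Nat.cast_add, Nat.cast_one] using
      (summable_nat_add_iff 1).2 (Complex.summable_one_div_nat_cpow.2 hs)
  rw [zeta_eq_tsum_one_div_nat_add_one_cpow hs]
  refine hsum.hasSum.tendsto_sum_nat.congr fun k ↦ ?_
  rw [← Finset.Ico_add_one_right_eq_Icc, Finset.sum_Ico_eq_sum_range, Nat.add_sub_cancel]
  simp [add_comm, cpow_neg]

lemma riemannZeta_eq_zetaTrapezoid_of_one_lt_re {s : ℂ} (hs : 1 < s.re) :
    riemannZeta s = zetaTrapezoid s := by
  have hs1 : s ≠ 1 := by rintro rfl; simp at hs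
  refine tendsto_nhds_unique ?_ (tendsto_correctedZetaPartialSum hs1 (by linarith))
  have h1 := tendsto_natCast_cpow_of_re_neg (w := 1 - s) (by simp; linarith)
  have h2 := tendsto_natCast_cpow_of_re_neg (w := -s) (by simp; linarith)
  have := ((tendsto_sum_Icc_cpow_neg_riemannZeta hs).sub (h1.div_const (1 - s))).sub
    (h2.const_mul (1 / 2))
  rwa [zero_div, sub_zero, mul_zero, sub_zero] at this

lemma differentiableOn_trapezoidError {x : ℝ} (hx : 0 < x) :
    DifferentiableOn ℂ (fun s ↦ trapezoidError s x) {1}ᶜ := by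
  have hx0 : (x : ℂ) ≠ 0 := ofReal_ne_zero.2 hx.ne'
  have hx1 : (x : ℂ) + 1 ≠ 0 := by exact_mod_cast (by linarith : x + 1 ≠ 0)
  unfold trapezoidError
  refine ((differentiable_neg.const_cpow (.inl hx0)).add
      (differentiable_neg.const_cpow (.inl hx1))).differentiableOn.div_const _ |>.sub ?_
  refine (((differentiable_id.const_sub 1).const_cpow (.inl hx1)).sub
      ((differentiable_id.const_sub 1).const_cpow (.inl hx0))).differentiableOn.div
    (differentiable_id.const_sub 1).differentiableOn fun s hs ↦ sub_ne_zero.2 (Ne.symm hs)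

lemma differentiableOn_zetaTrapezoid :
    DifferentiableOn ℂ zetaTrapezoid ({s : ℂ | -1 < s.re} \ {1}) := by
  refine differentiableOn_of_locally_differentiableOn fun z hz ↦ ?_
  set a := (z.re - 1) / 2
  set R := ‖z‖ + 1
  have hz1 : -1 < z.re := hz.1
  have ha : -1 < a := by simp only [a]; linarith
  refine ⟨{s | a < s.re} ∩ Metric.ball 0 R,
    (isOpen_lt continuous_const continuous_re).inter Metric.isOpen_ball,
    ⟨by simp only [mem_ofPred_eq, a]; linarith, by simp [R]⟩, ?_⟩
  have hopen : IsOpen (({s : ℂ | -1 < s.re} \ {1}) ∩ ({s | a < s.re} ∩ Metric.ball 0 R)) :=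
    ((isOpen_lt continuous_const continuous_re).sdiff isClosed_singleton).inter
      ((isOpen_lt continuous_const continuous_re).inter Metric.isOpen_ball)
  have htsum : DifferentiableOn ℂ (fun s ↦ ∑' j : ℕ, trapezoidError s (j + 1))
      (({s : ℂ | -1 < s.re} \ {1}) ∩ ({s | a < s.re} ∩ Metric.ball 0 R)) :=
    differentiableOn_tsum_of_summable_norm
      ((summable_nat_add_one_rpow (p := -a - 2) (by linarith)).mul_left (R * (R + 1) / 4))
      (fun j ↦ (differentiableOn_trapezoidError (by positivity)).mono fun s hs ↦ hs.1.2)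
      hopen fun j s hs ↦ norm_trapezoidError_natCast_add_one_le hs.1.2 (by linarith) hs.2.1.le
        (mem_ball_zero_iff.1 hs.2.2).le j
  exact (htsum.add_const _).sub ((differentiableOn_const 1).div
    ((differentiableOn_const 1).sub differentiableOn_id)
    fun s hs ↦ sub_ne_zero.2 (Ne.symm hs.1.2))

lemma riemannZeta_eq_zetaTrapezoid {s : ℂ} (hre : -1 < s.re) (hs : s ≠ 1) :
    riemannZeta s = zetaTrapezoid s := by
  have hU : IsOpen ({z : ℂ | -1 < z.re} \ {1}) :=
    (isOpen_lt continuous_const continuous_re).sdiff isClosed_singleton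
  have hζ : AnalyticOnNhd ℂ riemannZeta ({z : ℂ | -1 < z.re} \ {1}) :=
    DifferentiableOn.analyticOnNhd
      (fun z hz ↦ (differentiableAt_riemannZeta hz.2).differentiableWithinAt) hU
  have hev : riemannZeta =ᶠ[𝓝 2] zetaTrapezoid := by
    filter_upwards [(isOpen_lt continuous_const continuous_re).mem_nhds
      (show (1 : ℝ) < (2 : ℂ).re by norm_num)] with z hz
    exact riemannZeta_eq_zetaTrapezoid_of_one_lt_re hz
  exact hζ.eqOn_of_preconnected_of_eventuallyEq (differentiableOn_zetaTrapezoid.analyticOnNhd hU)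
    (isPreconnected_re_gt_diff_singleton (by norm_num)) (by norm_num) hev ⟨hre, hs⟩

/-- For `-1 < Re s ≤ 0`, the limit of
`∑_{j=1}^k j^{-s} - k^{1-s}/(1-s) - (1/2)k^{-s}` as `k → ∞` exists and equals `ζ(s)`. -/
theorem zeta_eq_lim_partial_sums_strip_neg_one_zero (s : ℂ)
    (h0 : -1 < s.re) (h1 : s.re ≤ 0) :
    Tendsto (fun k : ℕ =>
        (∑ j ∈ Finset.Icc 1 k, (j : ℂ) ^ (-s)) - (k : ℂ) ^ (1 - s) / (1 - s)
          - (1 / 2) * (k : ℂ) ^ (-s))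
      atTop (nhds (riemannZeta s)) := by
  have hs : s ≠ 1 := by rintro rfl; norm_num at h1
  rw [riemannZeta_eq_zetaTrapezoid h0 hs]
  exact tendsto_correctedZetaPartialSum hs h0
end

section
/- Let P_D be the discrete Cesàro operator on sequences, P_D[a]_n = (1/n)∑_{j=1}^{n} a_j. For m ∈ ℤ≥0, the sequence a_n = C(n−1, m) (binomial coefficient) satisfies P_D[a]_n = (1/(m+1)) C(n−1, m) for all n ≥ 1, i.e., it is an eigensequence of P_D with eigenvalue 1/(m+1). -/
lemma sum_aux (m : ℕ) : ∀ n : ℕ, ∑ j ∈ Finset.Icc 1 n, (j - 1).choose m = n.choose (m + 1) := by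
  intro n
  induction n with
  | zero => simp
  | succ n ih =>
    rw [show Finset.Icc 1 (n + 1) = insert (n + 1) (Finset.Icc 1 n) by
          ext x; simp [Finset.mem_Icc]; omega,
        Finset.sum_insert (by simp), ih, Nat.choose_succ_succ']
    simp

/-- For `m ∈ ℤ≥0`, the binomial sequence `a_n = C(n-1, m)` is an eigensequence of the
discrete Cesàro operator `P_D[a]_n = (1/n)∑_{j=1}^n a_j` with eigenvalue `1/(m+1)`. -/
theorem discrete_cesaro_eigensequence_binomial (m : ℕ) :
    ∀ n : ℕ, 1 ≤ n →
      (1 / (n : ℚ)) * (∑ j ∈ Finset.Icc 1 n, ((j - 1).choose m : ℚ))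
        = (1 / (m + 1 : ℚ)) * ((n - 1).choose m : ℚ) := by
  intro n hn
  obtain ⟨N, rfl⟩ : ∃ N, n = N + 1 := ⟨n - 1, by omega⟩
  have h1 : (∑ j ∈ Finset.Icc 1 (N + 1), ((j - 1).choose m : ℚ))
      = ((N + 1).choose (m + 1) : ℚ) := by
    rw [← Nat.cast_sum, sum_aux]
  have h2 : (m + 1) * (N + 1).choose (m + 1) = (N + 1) * N.choose m := by
    rw [mul_comm, ← Nat.add_one_mul_choose_eq]
  rw [h1]
  have h2q : ((m : ℚ) + 1) * ((N + 1).choose (m + 1) : ℚ) = (N + 1) * (N.choose m : ℚ) := by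
    exact_mod_cast congrArg (Nat.cast : ℕ → ℚ) h2
  have hN : ((N : ℚ) + 1) ≠ 0 := by positivity
  have hm : ((m : ℚ) + 1) ≠ 0 := by positivity
  simp only [Nat.add_sub_cancel]
  push_cast
  field_simp
  linarith [h2q]
end
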